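/- arXiv:1801.01546 — 5 statements merged into one kernel-verified Lean document; each statement's English description precedes it below -/
import Mathlib

section
/- Let Y be an abelian group and P : Y → ℝ a function. Suppose there exist q : Y × Y → ℝ and integers n, l such that Δ_{(h,k)}^{l+1} q = 0 for all h,k ∈ Y, and Δ_h^{n+1} P(u) + Δ_{(h,0)} Δ_{(h,k)}^{n} q(u,v) = 0 for all u, v, h, k ∈ Y. Then Δ_h^{l+n+2} P(u) = 0 for all u, h ∈ Y, i.e. P is a polynomial. -/
open Finset

/-- Finite difference operator: `disc h f y = f (y + h) - f y`. -/
def disc {G M : Type*} [AddCommGroup G] [AddCommGroup M] (h : G) (f : G → M) : G → M :=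
  fun y => f (y + h) - f y

/-- A function on an abelian group is a polynomial if some iterated finite
difference of it vanishes identically. -/
def IsPolyFn {G M : Type*} [AddCommGroup G] [AddCommGroup M] (f : G → M) : Prop :=
  ∃ n : ℕ, ∀ (h : G) (y : G), (disc h)^[n + 1] f y = 0

lemma disc_fst {Y : Type*} [AddCommGroup Y] (m : ℕ) (F : Y × Y → ℝ) (h v : Y) :
    (disc h)^[m] (fun u => F (u, v)) = fun u => (disc (h, (0:Y)))^[m] F (u, v) := by
  induction m with
  | zero => rfl
  | succ m ih =>
      rw [Function.iterate_succ', Function.iterate_succ']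
      funext u
      simp only [Function.comp_apply, ih, disc, Prod.mk_add_mk, add_zero]

lemma disc_zero_fun {Y : Type*} [AddCommGroup Y] (m : ℕ) (h : Y) :
    (disc h)^[m] (0 : Y → ℝ) = 0 := by
  induction m with
  | zero => rfl
  | succ m ih =>
      rw [Function.iterate_succ', Function.comp_apply, ih]
      funext u
      simp [disc]

theorem stmt_1 {Y : Type*} [AddCommGroup Y] (P : Y → ℝ) (q : Y × Y → ℝ) (n l : ℕ)
    (hq : ∀ (h k : Y) (u v : Y), (disc (h, k))^[l + 1] q (u, v) = 0)
    (heq : ∀ u v h k : Y,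
      (disc h)^[n + 1] P u + disc (h, (0 : Y)) ((disc (h, k))^[n] q) (u, v) = 0) :
    ∀ u h : Y, (disc h)^[l + n + 2] P u = 0 := by
  intro u h
  -- from heq with k = 0, v = 0
  have h1 : ∀ u : Y, (disc h)^[n + 1] P u = -((disc (h, (0:Y)))^[n+1] q (u, 0)) := by
    intro u
    have := heq u 0 h 0
    rw [Function.iterate_succ', Function.comp_apply]
    rw [Function.iterate_succ', Function.comp_apply] at this ⊢
    linarith
  have hP : (disc h)^[n+1] P = fun u => (-((disc (h, (0:Y)))^[n+1] q ·)) (u, 0) := by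
    funext u; exact h1 u
  have key : (l + n + 2) = (l + 1) + (n + 1) := by ring
  rw [key, Function.iterate_add_apply, hP]
  have neg_lemma : ∀ (m : ℕ) (hh : Y) (f : Y → ℝ),
      (disc hh)^[m] (fun u => -f u) = fun u => -((disc hh)^[m] f u) := by
    intro m hh
    induction m with
    | zero => intro f; rfl
    | succ m ih =>
        intro f
        have hstep : (disc hh fun u => -f u) = fun u => -(disc hh f u) := by
          funext u; simp [disc]; ring
        simp only [Function.iterate_succ_apply, hstep, ih]
  have := disc_fst (Y := Y) (l + 1) (fun p => (disc (h, (0:Y)))^[n+1] q p) h 0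
  show (disc h)^[l+1] (fun u => -((disc (h, (0:Y)))^[n+1] q (u, 0))) u = 0
  rw [neg_lemma (l+1) h (fun u => (disc (h, (0:Y)))^[n+1] q (u, 0)), this]
  -- now: -( (disc (h,0))^[l+1] ((disc (h,0))^[n+1] q) (u,0) ) = 0
  have comm : (disc (h, (0:Y)))^[l+1] ((disc (h, (0:Y)))^[n+1] q)
      = (disc (h, (0:Y)))^[n+1] ((disc (h, (0:Y)))^[l+1] q) := by
    rw [← Function.iterate_add_apply, ← Function.iterate_add_apply, Nat.add_comm]
  have hq0 : (disc (h, (0:Y)))^[l+1] q = 0 := by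
    funext p
    exact hq h 0 p.1 p.2
  simp only [comm, hq0]
  have := disc_zero_fun (Y := Y × Y) (n+1) (h, (0:Y))
  rw [this]; simp
end

section
/- Let Y be an abelian group in which every element is divisible by 2 (i.e. the doubling map is surjective), and let φ : Y → ℝ satisfy Δ_{2k} Δ_h^{m} φ(u) = 0 for all u, h, k ∈ Y, where m ≥ 1. Then Δ_h^{m+1} φ(u) = 0 for all u, h ∈ Y. -/
open Finset

theorem stmt_2 {Y : Type*} [AddCommGroup Y]
    (hsur : Function.Surjective (fun y : Y => 2 • y))
    (φ : Y → ℝ) (m : ℕ) (hm : 1 ≤ m)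
    (hφ : ∀ u h k : Y, disc (2 • k) ((disc h)^[m] φ) u = 0) :
    ∀ u h : Y, (disc h)^[m + 1] φ u = 0 := by
  intro u h
  obtain ⟨k, hk⟩ := hsur h
  rw [Function.iterate_succ_apply', ← hk]
  exact hφ u ((fun y : Y => 2 • y) k) k
end

section
/- Let Y be an abelian group and φ₁,…,φ_n : Y → ℝ functions satisfying Σ_{j=1}^n [φ_j(u + δ_j v) - φ_j(u - δ_j v)] = r(u,v) for all u,v ∈ Y, where δ_1,…,δ_n are automorphisms of Y such that δ_i + δ_j and δ_i - δ_j are automorphisms for all i ≠ j, and r is a polynomial on Y². If moreover the doubling map on Y is surjective, then each φ_j is a polynomial on Y. -/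
open Finset

namespace StmtAux

variable {G H : Type*} [AddCommGroup G] [AddCommGroup H]

def DL (ws : List G) (f : G → ℝ) : G → ℝ := ws.foldr disc f

@[simp] lemma DL_nil (f : G → ℝ) : DL ([] : List G) f = f := rfl

@[simp] lemma DL_cons (w : G) (ws : List G) (f : G → ℝ) :
    DL (w :: ws) f = disc w (DL ws f) := rfl

lemma disc_comp (ρ : G → H) (hρ : ∀ a b, ρ (a + b) = ρ a + ρ b)
    (w : G) (f : H → ℝ) : disc w (f ∘ ρ) = (disc (ρ w) f) ∘ ρ := by
  funext x; simp [disc, Function.comp, hρ]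

lemma disc_iter_comp (ρ : G → H) (hρ : ∀ a b, ρ (a + b) = ρ a + ρ b)
    (w : G) (k : ℕ) (f : H → ℝ) :
    (disc w)^[k] (f ∘ ρ) = ((disc (ρ w))^[k] f) ∘ ρ := by
  induction k generalizing f with
  | zero => rfl
  | succ k ih =>
      rw [Function.iterate_succ_apply, Function.iterate_succ_apply,
        disc_comp ρ hρ, ih]

lemma DL_comp (ρ : G → H) (hρ : ∀ a b, ρ (a + b) = ρ a + ρ b)
    (ws : List G) (f : H → ℝ) :
    DL ws (f ∘ ρ) = (DL (ws.map ρ) f) ∘ ρ := by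
  induction ws with
  | nil => rfl
  | cons w ws ih => simp [ih, disc_comp ρ hρ]

@[simp] lemma disc_zero_fn (w : G) : disc w (0 : G → ℝ) = 0 := by
  funext y; simp [disc]

@[simp] lemma disc_zero (f : G → ℝ) : disc (0 : G) f = 0 := by
  funext y; simp [disc]

lemma DL_zero (ws : List G) : DL ws (0 : G → ℝ) = 0 := by
  induction ws with
  | nil => rfl
  | cons w ws ih => simp [ih]

lemma DL_of_zero_mem {ws : List G} (hm : (0 : G) ∈ ws) (f : G → ℝ) :
    DL ws f = 0 := by
  induction ws with
  | nil => simp at hm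
  | cons w ws ih =>
      rcases List.mem_cons.1 hm with h0 | h0
      · rw [DL_cons, ← h0, disc_zero]
      · rw [DL_cons, ih h0, disc_zero_fn]

lemma DL_replicate (m : ℕ) (h : G) (f : G → ℝ) :
    DL (List.replicate m h) f = (disc h)^[m] f := by
  induction m with
  | zero => rfl
  | succ m ih => rw [List.replicate_succ, DL_cons, ih, Function.iterate_succ_apply']

lemma disc_sub (w : G) (f g : G → ℝ) : disc w (f - g) = disc w f - disc w g := by
  funext y; simp [disc]; ring

lemma DL_sub (ws : List G) (f g : G → ℝ) : DL ws (f - g) = DL ws f - DL ws g := by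
  induction ws with
  | nil => rfl
  | cons w ws ih => simp [ih, disc_sub]

lemma disc_sum {ι : Type*} (w : G) (s : Finset ι) (F : ι → G → ℝ) :
    disc w (∑ i ∈ s, F i) = ∑ i ∈ s, disc w (F i) := by
  funext y; simp [disc, Finset.sum_apply, Finset.sum_sub_distrib]

lemma DL_sum {ι : Type*} (ws : List G) (s : Finset ι) (F : ι → G → ℝ) :
    DL ws (∑ i ∈ s, F i) = ∑ i ∈ s, DL ws (F i) := by
  induction ws with
  | nil => rfl
  | cons w ws ih => simp [ih, disc_sum]

lemma disc_comm (w w' : G) (f : G → ℝ) :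
    disc w (disc w' f) = disc w' (disc w f) := by
  funext y; simp only [disc]; rw [add_right_comm]; ring

lemma DL_disc (ws : List G) (w : G) (f : G → ℝ) :
    DL ws (disc w f) = disc w (DL ws f) := by
  induction ws with
  | nil => rfl
  | cons w' ws ih => simp [ih, disc_comm]

lemma DL_disc_iter (ws : List G) (w : G) (k : ℕ) (f : G → ℝ) :
    DL ws ((disc w)^[k] f) = (disc w)^[k] (DL ws f) := by
  induction k with
  | zero => rfl
  | succ k ih =>
      rw [Function.iterate_succ_apply', DL_disc, ih, Function.iterate_succ_apply']



end StmtAux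

section Rho

variable {Y : Type*} [AddCommGroup Y]

def rhoP (e : Y ≃+ Y) : Y × Y → Y := fun x => x.1 + e x.2

def rhoM (e : Y ≃+ Y) : Y × Y → Y := fun x => x.1 - e x.2

lemma rhoP_add (e : Y ≃+ Y) : ∀ a b : Y × Y, rhoP e (a + b) = rhoP e a + rhoP e b := by
  intro a b
  simp only [rhoP, Prod.fst_add, Prod.snd_add, map_add]
  abel

lemma rhoM_add (e : Y ≃+ Y) : ∀ a b : Y × Y, rhoM e (a + b) = rhoM e a + rhoM e b := by
  intro a b
  simp only [rhoM, Prod.fst_add, Prod.snd_add, map_add]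
  abel

end Rho

open StmtAux in
theorem stmt_3 {Y : Type*} [AddCommGroup Y] {n : ℕ}
    (δ : Fin n → (Y ≃+ Y))
    (hsum : ∀ i j, i ≠ j → Function.Bijective (fun y => δ i y + δ j y))
    (hdiff : ∀ i j, i ≠ j → Function.Bijective (fun y => δ i y - δ j y))
    (φ : Fin n → Y → ℝ) (r : Y × Y → ℝ) (hr : IsPolyFn r)
    (heq : ∀ u v : Y, ∑ j, (φ j (u + δ j v) - φ j (u - δ j v)) = r (u, v))
    (hsur : Function.Surjective (fun y : Y => 2 • y)) :
    ∀ j, IsPolyFn (φ j) := by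
  classical
  intro j
  obtain ⟨d, hd⟩ := hr
  -- Choose increments in Y × Y
  have hch0 : ∀ h : Y, ∃ w : Y × Y, rhoM (δ j) w = 0 ∧ rhoP (δ j) w = h := by
    intro h
    obtain ⟨c, hc⟩ := hsur ((δ j).symm h)
    refine ⟨(δ j c, c), by simp [rhoM], ?_⟩
    have h2 : δ j c + δ j c = h := by
      have h3 := congrArg (δ j) hc
      simp only at h3
      rw [two_smul, map_add] at h3
      simpa using h3
    simpa [rhoP] using h2
  have hchp : ∀ i : Fin n, ∀ h : Y, ∃ w : Y × Y,
      (i ≠ j → rhoP (δ i) w = 0) ∧ rhoP (δ j) w = h := by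
    intro i h
    by_cases hij : i = j
    · exact ⟨(h, 0), fun hc => absurd hij hc, by simp [rhoP]⟩
    · obtain ⟨b, hb⟩ := (hdiff j i (Ne.symm hij)).surjective h
      simp only at hb
      refine ⟨(-(δ i b), b), fun _ => by simp [rhoP], ?_⟩
      simp only [rhoP, neg_add_eq_sub]
      exact hb
  have hchm : ∀ i : Fin n, ∀ h : Y, ∃ w : Y × Y,
      (i ≠ j → rhoM (δ i) w = 0) ∧ rhoP (δ j) w = h := by
    intro i h
    by_cases hij : i = j
    · exact ⟨(h, 0), fun hc => absurd hij hc, by simp [rhoP]⟩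
    · obtain ⟨b, hb⟩ := (hsum i j hij).surjective h
      simp only at hb
      exact ⟨(δ i b, b), fun _ => by simp [rhoM], by simpa [rhoP] using hb⟩
  choose w0 hw0m hw0p using hch0
  choose wp hwp0 hwpj using hchp
  choose wm hwm0 hwmj using hchm
  set ws : Y → List (Y × Y) :=
    fun h => w0 h :: (List.finRange n).flatMap (fun i => [wp i h, wm i h]) with hws_def
  have hmem0 : ∀ h, w0 h ∈ ws h := fun h => List.mem_cons_self
  have hmemp : ∀ (i : Fin n) (h : Y), wp i h ∈ ws h := by
    intro i h
    exact List.mem_cons_of_mem _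
      (List.mem_flatMap.2 ⟨i, List.mem_finRange i, by simp⟩)
  have hmemm : ∀ (i : Fin n) (h : Y), wm i h ∈ ws h := by
    intro i h
    exact List.mem_cons_of_mem _
      (List.mem_flatMap.2 ⟨i, List.mem_finRange i, by simp⟩)
  have hlen : ∀ h, (ws h).length = 2 * n + 1 := by
    intro h
    simp only [hws_def, List.length_cons, List.length_flatMap]
    simp [Function.comp_def, mul_comm]
  have hall : ∀ h : Y, ∀ w ∈ ws h, rhoP (δ j) w = h := by
    intro h w hw
    rcases List.mem_cons.1 hw with rfl | hw
    · exact hw0p h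
    · obtain ⟨i, -, hw⟩ := List.mem_flatMap.1 hw
      simp at hw
      rcases hw with rfl | rfl
      · exact hwpj i h
      · exact hwmj i h
  have hrep : ∀ h : Y, (ws h).map (rhoP (δ j)) = List.replicate (2 * n + 1) h := by
    intro h
    refine List.eq_replicate_iff.2 ⟨by simp [hlen h], ?_⟩
    intro b hb
    obtain ⟨w, hw, rfl⟩ := List.mem_map.1 hb
    exact hall h w hw
  have hF : (∑ i, ((φ i ∘ rhoP (δ i)) - (φ i ∘ rhoM (δ i)))) = r := by
    funext x
    have h1 := heq x.1 x.2
    simpa [rhoP, rhoM, Finset.sum_apply] using h1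
  have key : ∀ h : Y, DL (ws h) r = ((disc h)^[2 * n + 1] (φ j)) ∘ rhoP (δ j) := by
    intro h
    have hz : ∀ i ∈ (univ : Finset (Fin n)), i ≠ j →
        DL (ws h) ((φ i ∘ rhoP (δ i)) - (φ i ∘ rhoM (δ i))) = 0 := by
      intro i _ hij
      have h1 : DL (ws h) (φ i ∘ rhoP (δ i)) = 0 := by
        rw [DL_comp _ (rhoP_add (δ i))]
        have : (0 : Y) ∈ (ws h).map (rhoP (δ i)) :=
          List.mem_map.2 ⟨wp i h, hmemp i h, hwp0 i h hij⟩
        rw [DL_of_zero_mem this]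
        funext x; simp
      have h2 : DL (ws h) (φ i ∘ rhoM (δ i)) = 0 := by
        rw [DL_comp _ (rhoM_add (δ i))]
        have : (0 : Y) ∈ (ws h).map (rhoM (δ i)) :=
          List.mem_map.2 ⟨wm i h, hmemm i h, hwm0 i h hij⟩
        rw [DL_of_zero_mem this]
        funext x; simp
      rw [DL_sub, h1, h2, sub_zero]
    rw [← hF, DL_sum, Finset.sum_eq_single_of_mem j (mem_univ j) hz]
    rw [DL_sub, DL_comp _ (rhoP_add (δ j)), DL_comp _ (rhoM_add (δ j)), hrep h,
      DL_replicate]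
    have hm0 : DL ((ws h).map (rhoM (δ j))) (φ j) = 0 :=
      DL_of_zero_mem (List.mem_map.2 ⟨w0 h, hmem0 h, hw0m h⟩) _
    rw [hm0]
    funext x; simp
  refine ⟨d + 2 * n + 1, fun h y => ?_⟩
  have h2 : (disc ((h, 0) : Y × Y))^[d + 1] (DL (ws h) r) = 0 := by
    rw [← DL_disc_iter]
    have : (disc ((h, 0) : Y × Y))^[d + 1] r = 0 := funext fun x => hd (h, 0) x
    rw [this, DL_zero]
  have h1 : (disc ((h, 0) : Y × Y))^[d + 1] (((disc h)^[2 * n + 1] (φ j)) ∘ rhoP (δ j))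
      = ((disc h)^[d + 1] ((disc h)^[2 * n + 1] (φ j))) ∘ rhoP (δ j) := by
    have h3 := disc_iter_comp (rhoP (δ j)) (rhoP_add (δ j)) ((h, 0) : Y × Y) (d + 1)
      ((disc h)^[2 * n + 1] (φ j))
    have h4 : rhoP (δ j) ((h, 0) : Y × Y) = h := by simp [rhoP]
    rwa [h4] at h3
  have e1 : ((disc h)^[d + 1] ((disc h)^[2 * n + 1] (φ j))) ∘ rhoP (δ j) = 0 := by
    rw [← h1, ← key h]
    exact h2
  have e2 := congrFun e1 ((y, 0) : Y × Y)
  simp only [Function.comp_apply, Pi.zero_apply] at e2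
  have h5 : rhoP (δ j) ((y, 0) : Y × Y) = y := by simp [rhoP]
  rw [h5] at e2
  have h6 : d + 2 * n + 1 + 1 = (d + 1) + (2 * n + 1) := by omega
  rw [h6, Function.iterate_add_apply]
  exact e2
end

section
/- Let X be a (second countable) locally compact abelian group with character group Y, let a_1,…,a_n and b_1,…,b_n be integers, and let ξ_1,…,ξ_n be Q-independent X-valued random variables with distributions μ_j. Then the linear forms L₁ = Σ a_j ξ_j and L₂ = Σ b_j ξ_j are Q-independent if and only if the characteristic functions satisfy Π_{j=1}^n μ̂_j(a_j u + b_j v) = (Π_j μ̂_j(a_j u))(Π_j μ̂_j(b_j v)) exp{q(u,v)} for all u,v ∈ Y, where q is a continuous polynomial on Y² with q(0,0) = 0. -/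
open MeasureTheory Finset

noncomputable section

/-- The character group (Pontryagin dual) of an additive topological abelian group `X`. -/
abbrev GDual (X : Type*) [AddCommGroup X] [TopologicalSpace X] :=
  PontryaginDual (Multiplicative X)

/-- The value `(x, y)` of a character `y` at `x`, as a complex number. -/
def pairC {X : Type*} [AddCommGroup X] [TopologicalSpace X]
    (y : GDual X) (x : X) : ℂ :=
  (y (Multiplicative.ofAdd x) : ℂ)

/-- The characteristic function of (the distribution of) an `X`-valued random variable. -/
def charFn {Ω X : Type*} [MeasurableSpace Ω] [AddCommGroup X] [TopologicalSpace X]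
    (P : Measure Ω) (ξ : Ω → X) (y : GDual X) : ℂ :=
  ∫ ω, pairC y (ξ ω) ∂P

/-- Multiplicative finite difference operator (the dual group is written
multiplicatively): `discM h f y = f (y * h) - f y`. -/
def discM {G : Type*} [CommGroup G] (h : G) (f : G → ℂ) : G → ℂ :=
  fun y => f (y * h) - f y

/-- A function on a (multiplicatively written) abelian group is a polynomial if some
iterated finite difference of it vanishes identically. -/
def IsPolyM {G : Type*} [CommGroup G] (f : G → ℂ) : Prop :=
  ∃ n : ℕ, ∀ (h : G) (y : G), (discM h)^[n + 1] f y = 0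

/-- `Q`-independence of the random variables `ξ 1, …, ξ n`. -/
def QIndep {Ω X : Type*} [MeasurableSpace Ω] [AddCommGroup X] [TopologicalSpace X]
    (P : Measure Ω) {n : ℕ} (ξ : Fin n → Ω → X) : Prop :=
  ∃ q : (Fin n → GDual X) → ℂ, Continuous q ∧ IsPolyM q ∧ q 1 = 0 ∧
    ∀ y : Fin n → GDual X,
      (∫ ω, ∏ j, pairC (y j) (ξ j ω) ∂P) = (∏ j, charFn P (ξ j) (y j)) * Complex.exp (q y)


section Aux

variable {G H : Type*} [CommGroup G] [CommGroup H]

lemma discM_iter_add (h : G) (n : ℕ) (f g : G → ℂ) :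
    (discM h)^[n] (fun y => f y + g y) = fun y => (discM h)^[n] f y + (discM h)^[n] g y := by
  induction n with
  | zero => rfl
  | succ n ih =>
    rw [Function.iterate_succ_apply', Function.iterate_succ_apply',
      Function.iterate_succ_apply', ih]
    funext y
    simp only [discM]
    ring

lemma discM_iter_sub (h : G) (n : ℕ) (f g : G → ℂ) :
    (discM h)^[n] (fun y => f y - g y) = fun y => (discM h)^[n] f y - (discM h)^[n] g y := by
  induction n with
  | zero => rfl
  | succ n ih =>
    rw [Function.iterate_succ_apply', Function.iterate_succ_apply',
      Function.iterate_succ_apply', ih]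
    funext y
    simp only [discM]
    ring

lemma discM_iter_zero (h : G) (n : ℕ) :
    (discM h)^[n] (fun _ => (0 : ℂ)) = fun _ => 0 := by
  induction n with
  | zero => rfl
  | succ n ih => rw [Function.iterate_succ_apply', ih]; funext y; simp [discM]

lemma discM_iter_mono {f : G → ℂ} (h : G) {k m : ℕ} (hk : ∀ y, (discM h)^[k] f y = 0)
    (hkm : k ≤ m) : ∀ y, (discM h)^[m] f y = 0 := by
  obtain ⟨d, rfl⟩ := Nat.exists_eq_add_of_le hkm
  intro y
  rw [Nat.add_comm, Function.iterate_add_apply]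
  rw [show (discM h)^[k] f = fun _ => (0:ℂ) from funext hk, discM_iter_zero]

lemma IsPolyM.addF {f g : G → ℂ} (hf : IsPolyM f) (hg : IsPolyM g) :
    IsPolyM (fun y => f y + g y) := by
  obtain ⟨nf, hf⟩ := hf
  obtain ⟨ng, hg⟩ := hg
  refine ⟨max nf ng, fun h y => ?_⟩
  rw [discM_iter_add]
  simp only [discM_iter_mono h (hf h) (show nf + 1 ≤ max nf ng + 1 by omega),
    discM_iter_mono h (hg h) (show ng + 1 ≤ max nf ng + 1 by omega), add_zero]

lemma IsPolyM.subF {f g : G → ℂ} (hf : IsPolyM f) (hg : IsPolyM g) :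
    IsPolyM (fun y => f y - g y) := by
  obtain ⟨nf, hf⟩ := hf
  obtain ⟨ng, hg⟩ := hg
  refine ⟨max nf ng, fun h y => ?_⟩
  rw [discM_iter_sub]
  simp only [discM_iter_mono h (hf h) (show nf + 1 ≤ max nf ng + 1 by omega),
    discM_iter_mono h (hg h) (show ng + 1 ≤ max nf ng + 1 by omega), sub_zero]

lemma discM_iter_comp (φ : G → H) (hφ : ∀ x y, φ (x * y) = φ x * φ y) (h : G) (n : ℕ)
    (f : H → ℂ) :
    (discM h)^[n] (fun y => f (φ y)) = fun y => (discM (φ h))^[n] f (φ y) := by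
  induction n with
  | zero => rfl
  | succ n ih =>
    rw [Function.iterate_succ_apply', Function.iterate_succ_apply', ih]
    funext y
    simp only [discM, hφ]

lemma IsPolyM.compF {f : H → ℂ} (hf : IsPolyM f) (φ : G → H)
    (hφ : ∀ x y, φ (x * y) = φ x * φ y) : IsPolyM (fun y => f (φ y)) := by
  obtain ⟨nf, hf⟩ := hf
  refine ⟨nf, fun h y => ?_⟩
  rw [discM_iter_comp φ hφ]
  exact hf (φ h) (φ y)

end Aux

section Pair

variable {X : Type*} [AddCommGroup X] [TopologicalSpace X]

def evalHom {A E : Type*} [CommGroup A] [TopologicalSpace A] [CommGroup E] [TopologicalSpace E]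
    [IsTopologicalGroup E] (g : A) : ContinuousMonoidHom A E →* E where
  toFun f := f g
  map_one' := rfl
  map_mul' _ _ := rfl

lemma pairC_mulChar (y z : GDual X) (x : X) : pairC (y * z) x = pairC y x * pairC z x := by
  show ((y (Multiplicative.ofAdd x) * z (Multiplicative.ofAdd x) : Circle) : ℂ) = _
  push_cast
  rfl

lemma pairC_add (y : GDual X) (x x' : X) : pairC y (x + x') = pairC y x * pairC y x' := by
  unfold pairC
  rw [show Multiplicative.ofAdd (x + x')
      = Multiplicative.ofAdd x * Multiplicative.ofAdd x' from rfl, map_mul]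
  push_cast
  rfl

lemma pairC_zpow (y : GDual X) (c : ℤ) (x : X) : pairC (y ^ c) x = pairC y (c • x) := by
  unfold pairC
  have h1 : (y ^ c) (Multiplicative.ofAdd x) = (y (Multiplicative.ofAdd x)) ^ c :=
    map_zpow (evalHom _) y c
  rw [h1, show Multiplicative.ofAdd (c • x) = (Multiplicative.ofAdd x) ^ c from rfl, map_zpow]

lemma pairC_sum {ι : Type*} (y : GDual X) (s : Finset ι) (f : ι → X) :
    pairC y (∑ j ∈ s, f j) = ∏ j ∈ s, pairC y (f j) := by
  classical
  induction s using Finset.cons_induction with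
  | empty =>
    simp only [Finset.sum_empty, Finset.prod_empty]
    unfold pairC
    rw [show Multiplicative.ofAdd (0 : X) = 1 from rfl, map_one]
    norm_cast
  | cons j s hj ih => rw [Finset.sum_cons, Finset.prod_cons, pairC_add, ih]

end Pair

theorem stmt_4 {Ω X : Type*} [MeasurableSpace Ω] [AddCommGroup X] [TopologicalSpace X]
    [IsTopologicalAddGroup X] [LocallyCompactSpace X] [SecondCountableTopology X]
    (P : Measure Ω) [IsProbabilityMeasure P] {n : ℕ}
    (a b : Fin n → ℤ) (ξ : Fin n → Ω → X) (hQ : QIndep P ξ) :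
    QIndep P ![fun ω => ∑ j, a j • ξ j ω, fun ω => ∑ j, b j • ξ j ω] ↔
      ∃ q : GDual X × GDual X → ℂ, Continuous q ∧ IsPolyM q ∧ q 1 = 0 ∧
        ∀ u v : GDual X,
          (∏ j, charFn P (ξ j) (u ^ a j * v ^ b j)) =
            ((∏ j, charFn P (ξ j) (u ^ a j)) * ∏ j, charFn P (ξ j) (v ^ b j)) *
              Complex.exp (q (u, v)) := by
  obtain ⟨q₀, hq₀c, hq₀p, hq₀1, hq₀⟩ := hQ
  have hpt : ∀ (u v : GDual X) (ω : Ω),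
      pairC u (∑ j, a j • ξ j ω) * pairC v (∑ j, b j • ξ j ω)
        = ∏ j, pairC (u ^ a j * v ^ b j) (ξ j ω) := by
    intro u v ω
    rw [pairC_sum, pairC_sum, ← Finset.prod_mul_distrib]
    refine Finset.prod_congr rfl fun j _ => ?_
    rw [pairC_mulChar, pairC_zpow, pairC_zpow]
  have hpt1 : ∀ (c : Fin n → ℤ) (u : GDual X) (ω : Ω),
      pairC u (∑ j, c j • ξ j ω) = ∏ j, pairC (u ^ c j) (ξ j ω) := by
    intro c u ω
    rw [pairC_sum]
    exact Finset.prod_congr rfl fun j _ => (pairC_zpow u (c j) _).symm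
  have hL : ∀ (c : Fin n → ℤ) (u : GDual X),
      charFn P (fun ω => ∑ j, c j • ξ j ω) u
        = (∏ j, charFn P (ξ j) (u ^ c j)) * Complex.exp (q₀ fun j => u ^ c j) := by
    intro c u
    unfold charFn
    simp_rw [hpt1 c u]
    exact hq₀ _
  have hint : ∀ u v : GDual X,
      (∫ ω, pairC u (∑ j, a j • ξ j ω) * pairC v (∑ j, b j • ξ j ω) ∂P)
        = (∏ j, charFn P (ξ j) (u ^ a j * v ^ b j))
            * Complex.exp (q₀ fun j => u ^ a j * v ^ b j) := by
    intro u v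
    simp_rw [hpt u v]
    exact hq₀ _
  constructor
  · rintro ⟨Q, hQc, hQp, hQ1, hQeq⟩
    refine ⟨fun p => Q ![p.1, p.2] + q₀ (fun j => p.1 ^ a j) + q₀ (fun j => p.2 ^ b j)
        - q₀ (fun j => p.1 ^ a j * p.2 ^ b j), ?_, ?_, ?_, ?_⟩
    · have hm : Continuous fun p : GDual X × GDual X => (![p.1, p.2] : Fin 2 → GDual X) := by
        refine continuous_pi fun i => ?_
        fin_cases i
        · simpa using continuous_fst
        · simpa using continuous_snd
      have c1 := hQc.comp hm
      have c2 : Continuous fun p : GDual X × GDual X => q₀ fun j => p.1 ^ a j :=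
        hq₀c.comp (by fun_prop)
      have c3 : Continuous fun p : GDual X × GDual X => q₀ fun j => p.2 ^ b j :=
        hq₀c.comp (by fun_prop)
      have c4 : Continuous fun p : GDual X × GDual X => q₀ fun j => p.1 ^ a j * p.2 ^ b j :=
        hq₀c.comp (by fun_prop)
      exact ((c1.add c2).add c3).sub c4
    · have h1 : IsPolyM fun p : GDual X × GDual X => Q ![p.1, p.2] :=
        hQp.compF _ (by
          intro x y
          funext i
          fin_cases i <;> simp [Prod.fst_mul, Prod.snd_mul])
      have h2 : IsPolyM fun p : GDual X × GDual X => q₀ fun j => p.1 ^ a j :=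
        hq₀p.compF _ (by
          intro x y
          funext j
          simp [Prod.fst_mul, mul_zpow])
      have h3 : IsPolyM fun p : GDual X × GDual X => q₀ fun j => p.2 ^ b j :=
        hq₀p.compF _ (by
          intro x y
          funext j
          simp [Prod.snd_mul, mul_zpow])
      have h4 : IsPolyM fun p : GDual X × GDual X => q₀ fun j => p.1 ^ a j * p.2 ^ b j :=
        hq₀p.compF _ (by
          intro x y
          funext j
          simp only [Pi.mul_apply, Prod.fst_mul, Prod.snd_mul, mul_zpow]
          exact mul_mul_mul_comm _ _ _ _)
      exact ((h1.addF h2).addF h3).subF h4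
    · have eA : (fun j => (1 : GDual X) ^ a j) = (1 : Fin n → GDual X) := by
        funext j; exact one_zpow _
      have eB : (fun j => (1 : GDual X) ^ b j) = (1 : Fin n → GDual X) := by
        funext j; exact one_zpow _
      have eAB : (fun j => (1 : GDual X) ^ a j * (1 : GDual X) ^ b j)
          = (1 : Fin n → GDual X) := by
        funext j; simp
      have eM : (![(1 : GDual X), 1] : Fin 2 → GDual X) = 1 := by
        funext i; fin_cases i <;> rfl
      show Q ![1, 1] + q₀ (fun j => (1 : GDual X) ^ a j) + q₀ (fun j => (1 : GDual X) ^ b j)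
          - q₀ (fun j => (1 : GDual X) ^ a j * (1 : GDual X) ^ b j) = 0
      rw [eA, eB, eAB, eM, hQ1, hq₀1]
      ring
    · intro u v
      have E := hQeq ![u, v]
      simp only [Fin.prod_univ_two, Matrix.cons_val_zero, Matrix.cons_val_one,
        Matrix.head_cons] at E
      rw [hint u v, hL a u, hL b v] at E
      simp only []
      rw [Complex.exp_sub, Complex.exp_add, Complex.exp_add]
      field_simp
      linear_combination E
  · rintro ⟨q, hqc, hqp, hq1, hqe⟩
    refine ⟨fun y => q (y 0, y 1) + q₀ (fun j => (y 0) ^ a j * (y 1) ^ b j)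
        - q₀ (fun j => (y 0) ^ a j) - q₀ (fun j => (y 1) ^ b j), ?_, ?_, ?_, ?_⟩
    · have c1 : Continuous fun y : Fin 2 → GDual X => q (y 0, y 1) :=
        hqc.comp ((continuous_apply 0).prodMk (continuous_apply 1))
      have c2 : Continuous fun y : Fin 2 → GDual X => q₀ fun j => (y 0) ^ a j * (y 1) ^ b j :=
        hq₀c.comp (by fun_prop)
      have c3 : Continuous fun y : Fin 2 → GDual X => q₀ fun j => (y 0) ^ a j :=
        hq₀c.comp (by fun_prop)
      have c4 : Continuous fun y : Fin 2 → GDual X => q₀ fun j => (y 1) ^ b j :=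
        hq₀c.comp (by fun_prop)
      exact ((c1.add c2).sub c3).sub c4
    · have h1 : IsPolyM fun y : Fin 2 → GDual X => q (y 0, y 1) :=
        hqp.compF (fun y : Fin 2 → GDual X => (y 0, y 1)) (by intro x y; rfl)
      have h2 : IsPolyM fun y : Fin 2 → GDual X => q₀ fun j => (y 0) ^ a j * (y 1) ^ b j :=
        hq₀p.compF _ (by
          intro x y
          funext j
          simp only [Pi.mul_apply, mul_zpow]
          exact mul_mul_mul_comm _ _ _ _)
      have h3 : IsPolyM fun y : Fin 2 → GDual X => q₀ fun j => (y 0) ^ a j :=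
        hq₀p.compF _ (by intro x y; funext j; simp [mul_zpow])
      have h4 : IsPolyM fun y : Fin 2 → GDual X => q₀ fun j => (y 1) ^ b j :=
        hq₀p.compF _ (by intro x y; funext j; simp [mul_zpow])
      exact ((h1.addF h2).subF h3).subF h4
    · have eA : (fun j => (1 : GDual X) ^ a j) = (1 : Fin n → GDual X) := by
        funext j; exact one_zpow _
      have eB : (fun j => (1 : GDual X) ^ b j) = (1 : Fin n → GDual X) := by
        funext j; exact one_zpow _
      have eAB : (fun j => (1 : GDual X) ^ a j * (1 : GDual X) ^ b j)
          = (1 : Fin n → GDual X) := by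
        funext j; simp
      show q (1, 1) + q₀ (fun j => (1 : GDual X) ^ a j * (1 : GDual X) ^ b j)
          - q₀ (fun j => (1 : GDual X) ^ a j) - q₀ (fun j => (1 : GDual X) ^ b j) = 0
      rw [eA, eB, eAB, hq₀1, show ((1 : GDual X), (1 : GDual X)) = (1 : GDual X × GDual X)
        from rfl, hq1]
      ring
    · intro y
      simp only [Fin.prod_univ_two, Matrix.cons_val_zero, Matrix.cons_val_one,
        Matrix.head_cons]
      rw [hint (y 0) (y 1), hL a (y 0), hL b (y 1), hqe (y 0) (y 1)]
      rw [Complex.exp_sub, Complex.exp_sub, Complex.exp_add]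
      field_simp

end
end

section
/- Let Y be an abelian group, δ_1, …, δ_n automorphisms of Y with δ_i ± δ_j automorphisms for i ≠ j, and φ_1, …, φ_n : Y → ℝ satisfying Σ_{j=1}^n [φ_j(u + δ_j v) − φ_j(u − δ_j v)] = r(u,v) for all u, v ∈ Y with r a polynomial on Y². Then after one finite-difference step with h₁ = δ_n k₁, the function φ_n is eliminated: Σ_{j=1}^{n} Δ_{(δ_n+δ_j)k₁} φ_j(u + δ_j v) − Σ_{j=1}^{n−1} Δ_{(δ_n−δ_j)k₁} φ_j(u − δ_j v) = Δ_{(h₁,k₁)} r(u,v) for all u, v, k₁ ∈ Y. -/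
open Finset

theorem stmt_17 {Y : Type*} [AddCommGroup Y] {n : ℕ}
    (δ : Fin (n + 1) → (Y ≃+ Y))
    (hsum : ∀ i j, i ≠ j → Function.Bijective (fun y => δ i y + δ j y))
    (hdiff : ∀ i j, i ≠ j → Function.Bijective (fun y => δ i y - δ j y))
    (φ : Fin (n + 1) → Y → ℝ) (r : Y × Y → ℝ) (hr : IsPolyFn r)
    (heq : ∀ u v : Y, ∑ j, (φ j (u + δ j v) - φ j (u - δ j v)) = r (u, v)) :
    ∀ u v k : Y,
      (∑ j, (φ j (u + δ j v + (δ (Fin.last n) k + δ j k)) - φ j (u + δ j v)))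
        - (∑ j ∈ Finset.univ.erase (Fin.last n),
            (φ j (u - δ j v + (δ (Fin.last n) k - δ j k)) - φ j (u - δ j v)))
      = r (u + δ (Fin.last n) k, v + k) - r (u, v) := by
  intro u v k
  rw [Finset.sum_erase _ (by simp), ← heq, ← heq, ← Finset.sum_sub_distrib,
    ← Finset.sum_sub_distrib]
  refine Finset.sum_congr rfl fun j _ => ?_
  simp only [map_add]
  have h1 : u + δ j v + (δ (Fin.last n) k + δ j k)
      = u + δ (Fin.last n) k + (δ j v + δ j k) := by abel
  have h2 : u - δ j v + (δ (Fin.last n) k - δ j k)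
      = u + δ (Fin.last n) k - (δ j v + δ j k) := by abel
  rw [h1, h2]; ring
end
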